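/- (Main theorem) Let G be a Garside group, x ∈ G, y ∈ U_x, and u, v ∈ M with y^u ∈ U_x and y^v ∈ U_x. Then y^{u∧v} ∈ U_x, where ∧ denotes left gcd. -/

import Mathlib

namespace GarsideFormal

variable (G : Type*) [Group G]

/-- An atom of the submonoid `M`: a nontrivial element admitting no nontrivial
factorization inside `M`. -/
def IsMAtom (M : Submonoid G) (a : G) : Prop :=
  a ∈ M ∧ a ≠ 1 ∧ ∀ b ∈ M, ∀ c ∈ M, a = b * c → b = 1 ∨ c = 1

/-- A Garside monoid `M`, realized as a submonoid (positive cone) of its group of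
fractions `G`, together with its Garside element `δ`, left gcd and left lcm
operations (extended to `G`), and the cycling operation `cyc`. -/
structure Garside where
  M : Submonoid G
  δ : G
  gcd : G → G → G
  lcm : G → G → G
  cyc : G → G
  δ_mem : δ ∈ M
  /-- `G` is the group of fractions of `M`. -/
  fractions : ∀ g : G, ∃ a ∈ M, ∃ b ∈ M, g = a⁻¹ * b
  /-- `M` is generated by its atoms. -/
  atoms_generate : Submonoid.closure {a : G | IsMAtom G M a} = M
  /-- Atomicity: bounded factorization lengths into atoms. -/
  atomic_bound : ∀ a ∈ M, ∃ N : ℕ, ∀ L : List G,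
      (∀ b ∈ L, IsMAtom G M b) → L.prod = a → L.length ≤ N
  /-- Left divisors of `δ` coincide with right divisors of `δ`. -/
  divs_eq : {x : G | x ∈ M ∧ x⁻¹ * δ ∈ M} = {x : G | x ∈ M ∧ δ * x⁻¹ ∈ M}
  divs_finite : Set.Finite {x : G | x ∈ M ∧ x⁻¹ * δ ∈ M}
  divs_generate : Submonoid.closure {x : G | x ∈ M ∧ x⁻¹ * δ ∈ M} = M
  gcd_dvd_left : ∀ a b : G, (gcd a b)⁻¹ * a ∈ M
  gcd_dvd_right : ∀ a b : G, (gcd a b)⁻¹ * b ∈ M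
  gcd_greatest : ∀ a b x : G, x⁻¹ * a ∈ M → x⁻¹ * b ∈ M → x⁻¹ * gcd a b ∈ M
  lcm_dvd_left : ∀ a b : G, a⁻¹ * lcm a b ∈ M
  lcm_dvd_right : ∀ a b : G, b⁻¹ * lcm a b ∈ M
  lcm_least : ∀ a b x : G, a⁻¹ * x ∈ M → b⁻¹ * x ∈ M → (lcm a b)⁻¹ * x ∈ M
  /-- Cycling: if `k = inf x` then `cyc x = x ^ (τ⁻ᵏ A₁)` where `A₁ = δ ∧ δ⁻ᵏ x`
  is the first factor of the left normal form of `x` (when `len x = 0` this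
  gcd is `1` and `cyc x = x`). -/
  cyc_spec : ∀ (x : G) (k : ℤ),
      ((δ ^ k)⁻¹ * x ∈ M ∧ ∀ j : ℤ, (δ ^ j)⁻¹ * x ∈ M → j ≤ k) →
      cyc x = (δ ^ k * gcd δ ((δ ^ k)⁻¹ * x) * (δ ^ k)⁻¹)⁻¹ * x *
              (δ ^ k * gcd δ ((δ ^ k)⁻¹ * x) * (δ ^ k)⁻¹)

variable {G}

namespace Garside

variable (S : Garside G)

/-- Left divisibility `a ≼ b`. -/
def dvd (a b : G) : Prop := a⁻¹ * b ∈ S.M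

/-- Simple elements: the (left) divisors of `δ` in `M`. -/
def Simple (a : G) : Prop := a ∈ S.M ∧ a⁻¹ * S.δ ∈ S.M

/-- `k` is the infimum of `x`: maximal with `δ^k ≼ x`. -/
def IsInf (x : G) (k : ℤ) : Prop :=
  (S.δ ^ k)⁻¹ * x ∈ S.M ∧ ∀ j : ℤ, (S.δ ^ j)⁻¹ * x ∈ S.M → j ≤ k

/-- `s` is the supremum of `x`: minimal with `x ≼ δ^s`. -/
def IsSup (x : G) (s : ℤ) : Prop :=
  x⁻¹ * S.δ ^ s ∈ S.M ∧ ∀ j : ℤ, x⁻¹ * S.δ ^ j ∈ S.M → s ≤ j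

/-- `y` lies in the super summit set of `x`: `y` is conjugate to `x`, with
maximal infimum and minimal supremum among all conjugates of `x`. -/
def InSS (x y : G) : Prop :=
  IsConj x y ∧
  (∃ k : ℤ, S.IsInf y k ∧ ∀ z : G, IsConj x z → ∀ k' : ℤ, S.IsInf z k' → k' ≤ k) ∧
  (∃ s : ℤ, S.IsSup y s ∧ ∀ z : G, IsConj x z → ∀ s' : ℤ, S.IsSup z s' → s ≤ s')

/-- `y` lies in the ultra summit set of `x`: it is in the super summit set and
periodic under cycling. -/
def InUS (x y : G) : Prop :=
  S.InSS x y ∧ ∃ n : ℕ, 0 < n ∧ S.cyc^[n] y = y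

/-- `τ^k(z) = δ⁻ᵏ z δᵏ`, where `τ : z ↦ δ⁻¹zδ`. -/
def tauPow (k : ℤ) (z : G) : G := (S.δ ^ k)⁻¹ * z * S.δ ^ k

end Garside

/-- The ordered product `A (i+1) * A (i+2) * ⋯ * A r`. -/
def prodSeg (A : ℕ → G) (i r : ℕ) : G :=
  ((List.range (r - i)).map (fun j => A (i + 1 + j))).prod

namespace Garside

variable (S : Garside G)

/-- `x` has left normal form `δ^k A₁ ⋯ A_r`: each `Aᵢ` is a nontrivial simple
element and `(Aᵢ⁻¹ δ) ∧ A_{i+1} = 1`. -/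
def IsNormalForm (x : G) (k : ℤ) (r : ℕ) (A : ℕ → G) : Prop :=
  x = S.δ ^ k * prodSeg A 0 r ∧
  (∀ i, 1 ≤ i → i ≤ r → S.Simple (A i) ∧ A i ≠ 1) ∧
  (∀ i, 1 ≤ i → i < r → S.gcd ((A i)⁻¹ * S.δ) (A (i + 1)) = 1)

/-- The sequence `u₀, …, u_r` of the transport construction for `(x, u)`,
where `x` has normal form `δ^k A₁ ⋯ A_r`:
`u₀ = τᵏ(u)`, `u_r = u`, and `uᵢ = (A_{i+1} ⋯ A_r u) ∧ δ·τ(Aᵢ⁻¹ u_{i-1})`. -/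
def IsTransportSeq (k : ℤ) (r : ℕ) (A : ℕ → G) (u : G) (useq : ℕ → G) : Prop :=
  useq 0 = S.tauPow k u ∧ useq r = u ∧
  ∀ i, 1 ≤ i → i ≤ r →
    useq i = S.gcd (prodSeg A i r * u) (S.δ * S.tauPow 1 ((A i)⁻¹ * useq (i - 1)))

/-- The transport `φ_x(u) = τ⁻ᵏ(u₁) = τ⁻ᵏ(A₁⁻¹ · τᵏ(u) · (δ ∧ δ⁻ᵏ(x^u)))`,
where `k = inf x` and `A₁ = δ ∧ δ⁻ᵏ x`. -/
def transp (k : ℤ) (x u : G) : G :=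
  S.δ ^ k *
    ((S.gcd S.δ ((S.δ ^ k)⁻¹ * x))⁻¹ * S.tauPow k u *
      S.gcd S.δ ((S.δ ^ k)⁻¹ * (u⁻¹ * x * u))) * (S.δ ^ k)⁻¹

end Garside
namespace Garside

variable {G : Type*} [Group G] (S : Garside G)

/-! ### Basic divisibility lemmas -/

lemma dvd_refl' (a : G) : a⁻¹ * a ∈ S.M := by simp [one_mem]

lemma dvd_trans' {a b c : G} (h1 : a⁻¹ * b ∈ S.M) (h2 : b⁻¹ * c ∈ S.M) :
    a⁻¹ * c ∈ S.M := by
  have := mul_mem h1 h2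
  simpa [mul_assoc] using this

lemma exists_simples_list {a : G} (ha : a ∈ S.M) :
    ∃ L : List G, (∀ b ∈ L, b ∈ S.M ∧ b⁻¹ * S.δ ∈ S.M) ∧ L.prod = a := by
  have : a ∈ Submonoid.closure {x : G | x ∈ S.M ∧ x⁻¹ * S.δ ∈ S.M} := by
    rw [S.divs_generate]; exact ha
  obtain ⟨L, hL, hprod⟩ := Submonoid.exists_list_of_mem_closure this
  exact ⟨L, hL, hprod⟩

lemma exists_atoms_list {a : G} (ha : a ∈ S.M) :
    ∃ L : List G, (∀ b ∈ L, IsMAtom G S.M b) ∧ L.prod = a := by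
  have : a ∈ Submonoid.closure {x : G | IsMAtom G S.M x} := by
    rw [S.atoms_generate]; exact ha
  obtain ⟨L, hL, hprod⟩ := Submonoid.exists_list_of_mem_closure this
  exact ⟨L, hL, hprod⟩

/-- The monoid `M` has no nontrivial units. -/
lemma eq_one_of_inv_mem {a : G} (ha : a ∈ S.M) (ha' : a⁻¹ ∈ S.M) : a = 1 := by
  by_contra hne
  obtain ⟨L1, hL1, hp1⟩ := S.exists_atoms_list ha
  obtain ⟨L2, hL2, hp2⟩ := S.exists_atoms_list ha'
  have hL1ne : L1 ≠ [] := by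
    rintro rfl; exact hne (by simpa using hp1.symm)
  obtain ⟨N, hN⟩ := S.atomic_bound 1 (one_mem _)
  -- build arbitrarily long atom lists with product 1
  have key : ∀ n : ℕ, ∃ L : List G, (∀ b ∈ L, IsMAtom G S.M b) ∧ L.prod = 1 ∧
      n ≤ L.length := by
    intro n
    induction n with
    | zero => exact ⟨[], by simp, by simp, by simp⟩
    | succ n ih =>
        obtain ⟨L, hL, hLp, hLlen⟩ := ih
        refine ⟨(L1 ++ L2) ++ L, ?_, ?_, ?_⟩
        · intro b hb
          rcases List.mem_append.1 hb with hb | hb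
          · rcases List.mem_append.1 hb with hb | hb
            · exact hL1 b hb
            · exact hL2 b hb
          · exact hL b hb
        · simp [List.prod_append, hp1, hp2, hLp]
        · have : 1 ≤ L1.length := by
            cases L1 with
            | nil => exact absurd rfl hL1ne
            | cons x xs => simp
          simp only [List.length_append]
          omega
  obtain ⟨L, hL, hLp, hLlen⟩ := key (N + 1)
  have := hN L hL hLp
  omega

lemma dvd_antisymm' {a b : G} (h1 : a⁻¹ * b ∈ S.M) (h2 : b⁻¹ * a ∈ S.M) : a = b := by
  have h3 : (a⁻¹ * b)⁻¹ ∈ S.M := by simpa [mul_inv_rev] using h2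
  have h4 := S.eq_one_of_inv_mem h1 h3
  have h5 : a * (a⁻¹ * b) = a * 1 := by rw [h4]
  have h6 : b = a := by simpa [mul_assoc] using h5
  exact h6.symm

/-! ### τ : conjugation by δ preserves M -/

lemma divs_eq' {x : G} : (x ∈ S.M ∧ x⁻¹ * S.δ ∈ S.M) ↔ (x ∈ S.M ∧ S.δ * x⁻¹ ∈ S.M) := by
  have := Set.ext_iff.1 S.divs_eq x
  simpa using this

lemma tau_mem {a : G} (ha : a ∈ S.M) : S.δ⁻¹ * a * S.δ ∈ S.M := by
  have ha' : a ∈ Submonoid.closure {x : G | x ∈ S.M ∧ x⁻¹ * S.δ ∈ S.M} := by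
    rw [S.divs_generate]; exact ha
  clear ha
  induction ha' using Submonoid.closure_induction with
  | mem s hs =>
      obtain ⟨hs1, hs2⟩ := hs
      -- t = s⁻¹δ ∈ M ; δ⁻¹ s δ = t⁻¹ δ;  δ * t⁻¹ = s ∈ M so t⁻¹δ ∈ M
      have ht : S.δ * (s⁻¹ * S.δ)⁻¹ ∈ S.M := by
        simpa [mul_inv_rev, mul_assoc] using hs1
      have := (S.divs_eq' (x := s⁻¹ * S.δ)).2 ⟨hs2, ht⟩
      have h2 : (s⁻¹ * S.δ)⁻¹ * S.δ ∈ S.M := this.2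
      simpa [mul_inv_rev, mul_assoc] using h2
  | one => simpa using one_mem S.M
  | mul a b _ _ iha ihb =>
      have := mul_mem iha ihb
      have h : (S.δ⁻¹ * a * S.δ) * (S.δ⁻¹ * b * S.δ) = S.δ⁻¹ * (a * b) * S.δ := by group
      rwa [h] at this

lemma tau_inv_mem {a : G} (ha : a ∈ S.M) : S.δ * a * S.δ⁻¹ ∈ S.M := by
  have ha' : a ∈ Submonoid.closure {x : G | x ∈ S.M ∧ x⁻¹ * S.δ ∈ S.M} := by
    rw [S.divs_generate]; exact ha
  clear ha
  induction ha' using Submonoid.closure_induction with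
  | mem s hs =>
      obtain ⟨hs1, hs2⟩ := hs
      -- q = δ s⁻¹ ∈ M; δ s δ⁻¹ = δ q⁻¹ ∈ M by divs_eq
      have hq : S.δ * s⁻¹ ∈ S.M := ((S.divs_eq' (x := s)).1 ⟨hs1, hs2⟩).2
      have hqq : (S.δ * s⁻¹)⁻¹ * S.δ ∈ S.M := by
        simpa [mul_inv_rev, mul_assoc] using hs1
      have := ((S.divs_eq' (x := S.δ * s⁻¹)).1 ⟨hq, hqq⟩).2
      simpa [mul_inv_rev, mul_assoc] using this
  | one => simpa using one_mem S.M
  | mul a b _ _ iha ihb =>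
      have := mul_mem iha ihb
      have h : (S.δ * a * S.δ⁻¹) * (S.δ * b * S.δ⁻¹) = S.δ * (a * b) * S.δ⁻¹ := by group
      rwa [h] at this

/-- Conjugation by any power of δ preserves M. -/
lemma conj_zpow_mem (k : ℤ) {a : G} (ha : a ∈ S.M) :
    (S.δ ^ k)⁻¹ * a * S.δ ^ k ∈ S.M := by
  induction k using Int.induction_on with
  | zero => simpa using ha
  | succ n ih =>
      have := S.tau_mem ih
      have h : S.δ⁻¹ * ((S.δ ^ (n:ℤ))⁻¹ * a * S.δ ^ (n:ℤ)) * S.δ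
          = (S.δ ^ ((n:ℤ)+1))⁻¹ * a * S.δ ^ ((n:ℤ)+1) := by
        group
      rwa [h] at this
  | pred n ih =>
      have := S.tau_inv_mem ih
      have h : S.δ * ((S.δ ^ (-(n:ℤ)))⁻¹ * a * S.δ ^ (-(n:ℤ))) * S.δ⁻¹
          = (S.δ ^ (-(n:ℤ)-1))⁻¹ * a * S.δ ^ (-(n:ℤ)-1) := by
        group
      rwa [h] at this

lemma conj_zpow_mem' (k : ℤ) {a : G} (ha : a ∈ S.M) :
    S.δ ^ k * a * (S.δ ^ k)⁻¹ ∈ S.M := by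
  have := S.conj_zpow_mem (-k) ha
  simpa [zpow_neg] using this

end Garside
namespace Garside

variable {G : Type*} [Group G] (S : Garside G)

/-! ### gcd lemmas -/

lemma gcd_mem {a b : G} (ha : a ∈ S.M) (hb : b ∈ S.M) : S.gcd a b ∈ S.M := by
  have := S.gcd_greatest a b 1 (by simpa using ha) (by simpa using hb)
  simpa using this

lemma gcd_mul_left (c a b : G) : S.gcd (c * a) (c * b) = c * S.gcd a b := by
  apply S.dvd_antisymm'
  · -- (gcd(ca,cb))⁻¹ * (c * gcd a b) ∈ M
    have h := S.gcd_greatest a b (c⁻¹ * S.gcd (c*a) (c*b)) ?_ ?_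
    · simpa [mul_inv_rev, mul_assoc] using h
    · have := S.gcd_dvd_left (c*a) (c*b)
      simpa [mul_inv_rev, mul_assoc] using this
    · have := S.gcd_dvd_right (c*a) (c*b)
      simpa [mul_inv_rev, mul_assoc] using this
  · -- (c * gcd a b)⁻¹ * gcd(ca,cb) ∈ M
    have h := S.gcd_greatest (c*a) (c*b) (c * S.gcd a b) ?_ ?_
    · exact h
    · have := S.gcd_dvd_left a b
      simpa [mul_inv_rev, mul_assoc] using this
    · have := S.gcd_dvd_right a b
      simpa [mul_inv_rev, mul_assoc] using this

lemma gcd_conj_zpow (k : ℤ) (a b : G) :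
    S.gcd ((S.δ^k)⁻¹ * a * S.δ^k) ((S.δ^k)⁻¹ * b * S.δ^k)
      = (S.δ^k)⁻¹ * S.gcd a b * S.δ^k := by
  apply S.dvd_antisymm'
  · set X := S.gcd ((S.δ^k)⁻¹ * a * S.δ^k) ((S.δ^k)⁻¹ * b * S.δ^k) with hX
    have h := S.gcd_greatest a b (S.δ^k * X * (S.δ^k)⁻¹) ?_ ?_
    · have := S.conj_zpow_mem k h
      have e : (S.δ^k)⁻¹ * ((S.δ^k * X * (S.δ^k)⁻¹)⁻¹ * S.gcd a b) * S.δ^k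
          = X⁻¹ * ((S.δ^k)⁻¹ * S.gcd a b * S.δ^k) := by group
      rwa [e] at this
    · have h1 := S.gcd_dvd_left ((S.δ^k)⁻¹ * a * S.δ^k) ((S.δ^k)⁻¹ * b * S.δ^k)
      have := S.conj_zpow_mem' k h1
      have e : S.δ^k * (X⁻¹ * ((S.δ^k)⁻¹ * a * S.δ^k)) * (S.δ^k)⁻¹
          = (S.δ^k * X * (S.δ^k)⁻¹)⁻¹ * a := by group
      rwa [e] at this
    · have h1 := S.gcd_dvd_right ((S.δ^k)⁻¹ * a * S.δ^k) ((S.δ^k)⁻¹ * b * S.δ^k)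
      have := S.conj_zpow_mem' k h1
      have e : S.δ^k * (X⁻¹ * ((S.δ^k)⁻¹ * b * S.δ^k)) * (S.δ^k)⁻¹
          = (S.δ^k * X * (S.δ^k)⁻¹)⁻¹ * b := by group
      rwa [e] at this
  · have h := S.gcd_greatest ((S.δ^k)⁻¹ * a * S.δ^k) ((S.δ^k)⁻¹ * b * S.δ^k)
      ((S.δ^k)⁻¹ * S.gcd a b * S.δ^k) ?_ ?_
    · exact h
    · have := S.conj_zpow_mem k (S.gcd_dvd_left a b)
      have e : (S.δ^k)⁻¹ * ((S.gcd a b)⁻¹ * a) * S.δ^k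
          = ((S.δ^k)⁻¹ * S.gcd a b * S.δ^k)⁻¹ * ((S.δ^k)⁻¹ * a * S.δ^k) := by group
      rwa [e] at this
    · have := S.conj_zpow_mem k (S.gcd_dvd_right a b)
      have e : (S.δ^k)⁻¹ * ((S.gcd a b)⁻¹ * b) * S.δ^k
          = ((S.δ^k)⁻¹ * S.gcd a b * S.δ^k)⁻¹ * ((S.δ^k)⁻¹ * b * S.δ^k) := by group
      rwa [e] at this

lemma gcd_one_one : S.gcd S.δ (1:G) = 1 := by
  apply S.eq_one_of_inv_mem
  · have := S.gcd_greatest S.δ 1 1 (by simpa using S.δ_mem) (by simpa using one_mem S.M)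
    simpa using this
  · have := S.gcd_dvd_right S.δ 1
    simpa using this

/-! ### Nondegeneracy -/

lemma zpow_mem_of_nonneg {m : ℤ} (hm : 0 ≤ m) : S.δ ^ m ∈ S.M := by
  obtain ⟨n, rfl⟩ := Int.eq_ofNat_of_zero_le hm
  rw [zpow_natCast]
  exact pow_mem S.δ_mem n

lemma delta_zpow_nonneg (hδ : S.δ ≠ 1) {m : ℤ} (hm : S.δ ^ m ∈ S.M) : 0 ≤ m := by
  by_contra h
  push_neg at h
  have h1 : S.δ ^ (-m) ∈ S.M := S.zpow_mem_of_nonneg (by omega)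
  have h2 : (S.δ ^ m)⁻¹ ∈ S.M := by rwa [zpow_neg] at h1
  have h3 : S.δ ^ m = 1 := S.eq_one_of_inv_mem hm h2
  -- then δ is a unit: δ^(-m) = 1 and -m ≥ 1
  have h4 : S.δ ^ (-m) = 1 := by rw [zpow_neg, h3]; simp
  have h5 : S.δ * S.δ ^ (-m - 1) = 1 := by
    have : S.δ * S.δ ^ (-m - 1) = S.δ ^ (1 + (-m - 1)) := by
      rw [zpow_add, zpow_one]
    rw [this, show 1 + (-m-1) = -m by ring, h4]
  have h6 : S.δ ^ (-m - 1) ∈ S.M := S.zpow_mem_of_nonneg (by omega)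
  have h7 : S.δ⁻¹ = S.δ ^ (-m - 1) := inv_eq_of_mul_eq_one_right h5
  exact hδ (S.eq_one_of_inv_mem S.δ_mem (h7 ▸ h6))

lemma le_of_zpow_dvd (hδ : S.δ ≠ 1) {i j : ℤ} (h : (S.δ ^ i)⁻¹ * S.δ ^ j ∈ S.M) :
    i ≤ j := by
  have : S.δ ^ (j - i) ∈ S.M := by
    rw [sub_eq_add_neg, add_comm, zpow_add, zpow_neg]; exact h
  have := S.delta_zpow_nonneg hδ this
  omega

/-! ### The peeling lemma -/

/-- If `P ∈ M` divides `δ^t` (`t ≥ 1`), then `(δ ∧ P)⁻¹ P` divides `δ^(t-1)`. -/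
lemma peel {t : ℤ} (ht : 1 ≤ t) {P : G} (hP : P ∈ S.M)
    (hPt : P⁻¹ * S.δ ^ t ∈ S.M) :
    (P⁻¹ * S.gcd S.δ P) * S.δ ^ (t - 1) ∈ S.M := by
  set d := S.δ ^ t * P⁻¹ with hd
  have hdM : d ∈ S.M := by
    have := S.conj_zpow_mem' t hPt
    have e : S.δ ^ t * (P⁻¹ * S.δ ^ t) * (S.δ ^ t)⁻¹ = d := by rw [hd]; group
    rwa [e] at this
  set ℓ := S.lcm S.δ d with hℓ
  set w := d⁻¹ * ℓ with hw
  have hwM : w ∈ S.M := S.lcm_dvd_right _ _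
  -- ℓ ≼ d * δ
  have hℓdδ : ℓ⁻¹ * (d * S.δ) ∈ S.M := by
    apply S.lcm_least
    · have := S.tau_mem hdM
      have e : S.δ⁻¹ * d * S.δ = S.δ⁻¹ * (d * S.δ) := by group
      rwa [e] at this
    · have e : d⁻¹ * (d * S.δ) = S.δ := by group
      rw [e]; exact S.δ_mem
  -- ℓ ≼ δ^t  (= d * P)
  have hℓt : ℓ⁻¹ * S.δ ^ t ∈ S.M := by
    apply S.lcm_least
    · have : S.δ⁻¹ * S.δ ^ t = S.δ ^ (t - 1) := by
        rw [show t - 1 = -1 + t by ring, zpow_add, zpow_neg, zpow_one]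
      rw [this]; exact S.zpow_mem_of_nonneg (by omega)
    · have e : d⁻¹ * S.δ ^ t = P := by rw [hd]; group
      rw [e]; exact hP
  -- w ≼ δ
  have hwδ : w⁻¹ * S.δ ∈ S.M := by
    have e : w⁻¹ * S.δ = ℓ⁻¹ * (d * S.δ) := by rw [hw]; group
    rw [e]; exact hℓdδ
  -- w ≼ P
  have hwP : w⁻¹ * P ∈ S.M := by
    have e : w⁻¹ * P = ℓ⁻¹ * S.δ ^ t := by rw [hw, hd]; group
    rw [e]; exact hℓt
  -- w ≼ A := gcd δ P
  have hwA : w⁻¹ * S.gcd S.δ P ∈ S.M := S.gcd_greatest _ _ _ hwδ hwP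
  -- δ ≼ d * A
  have hδdA : S.δ⁻¹ * (d * S.gcd S.δ P) ∈ S.M := by
    have h1 : S.δ⁻¹ * ℓ ∈ S.M := S.lcm_dvd_left _ _
    have h2 := mul_mem h1 hwA
    have e : S.δ⁻¹ * ℓ * (w⁻¹ * S.gcd S.δ P) = S.δ⁻¹ * (d * S.gcd S.δ P) := by
      rw [hw]; group
    rwa [e] at h2
  -- conjugate by δ^(t-1)
  have := S.conj_zpow_mem (t - 1) hδdA
  have e : (S.δ ^ (t-1))⁻¹ * (S.δ⁻¹ * (d * S.gcd S.δ P)) * S.δ ^ (t-1)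
      = (P⁻¹ * S.gcd S.δ P) * S.δ ^ (t - 1) := by
    rw [hd]; group
  rwa [e] at this

/-! ### Every element of M divides a power of δ -/

lemma exists_dvd_pow {a : G} (ha : a ∈ S.M) :
    ∃ n : ℕ, a⁻¹ * S.δ ^ (n : ℤ) ∈ S.M := by
  have ha' : a ∈ Submonoid.closure {x : G | x ∈ S.M ∧ x⁻¹ * S.δ ∈ S.M} := by
    rw [S.divs_generate]; exact ha
  clear ha
  induction ha' using Submonoid.closure_induction with
  | mem s hs => exact ⟨1, by simpa using hs.2⟩
  | one => exact ⟨0, by simpa using one_mem S.M⟩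
  | mul a b _ _ iha ihb =>
      obtain ⟨na, hna⟩ := iha
      obtain ⟨nb, hnb⟩ := ihb
      refine ⟨na + nb, ?_⟩
      have h1 := S.conj_zpow_mem (nb : ℤ) hna
      have h2 := mul_mem hnb h1
      have e : b⁻¹ * S.δ ^ (nb:ℤ) * ((S.δ ^ (nb:ℤ))⁻¹ * (a⁻¹ * S.δ ^ (na:ℤ)) * S.δ ^ (nb:ℤ))
          = (a * b)⁻¹ * S.δ ^ ((na + nb : ℕ) : ℤ) := by
        push_cast
        rw [zpow_add]
        group
      rwa [e] at h2

/-! ### Finiteness of the divisors of δ^n -/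

lemma divisors_pow_finite (n : ℕ) :
    Set.Finite {d : G | d ∈ S.M ∧ d⁻¹ * S.δ ^ (n : ℤ) ∈ S.M} := by
  induction n with
  | zero =>
      apply Set.Finite.subset (Set.finite_singleton (1:G))
      rintro d ⟨hd1, hd2⟩
      simp only [Set.mem_singleton_iff]
      exact S.eq_one_of_inv_mem hd1 (by simpa using hd2)
  | succ n ih =>
      have hfin := (S.divs_finite.prod ih)
      apply Set.Finite.subset (hfin.image (fun p => p.1 * p.2))
      rintro d ⟨hd1, hd2⟩
      refine ⟨(S.gcd S.δ d, (S.gcd S.δ d)⁻¹ * d), ⟨⟨?_, ?_⟩, ?_, ?_⟩, by simp⟩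
      · exact S.gcd_mem S.δ_mem hd1
      · -- (gcd δ d)⁻¹ δ ∈ M
        exact S.gcd_dvd_left _ _
      · exact S.gcd_dvd_right _ _
      · -- ((gcd δ d)⁻¹ d)⁻¹ δ^n ∈ M  via peeling
        have hd2' : d⁻¹ * S.δ ^ ((n:ℤ) + 1) ∈ S.M := by push_cast at hd2; exact hd2
        have hp := S.peel (t := (n:ℤ) + 1) (by omega) hd1 hd2'
        have e : d⁻¹ * S.gcd S.δ d * S.δ ^ ((n:ℤ) + 1 - 1)
            = ((S.gcd S.δ d)⁻¹ * d)⁻¹ * S.δ ^ (n:ℤ) := by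
          rw [show (n:ℤ) + 1 - 1 = (n:ℤ) by ring]; group
        rwa [e] at hp

end Garside
namespace Garside

variable {G : Type*} [Group G] (S : Garside G)

/-- `z` is conjugate to `x` and satisfies `δ^k ≼ z ≼ δ^s`. -/
def SSc (x : G) (k s : ℤ) (z : G) : Prop :=
  IsConj x z ∧ (S.δ ^ k)⁻¹ * z ∈ S.M ∧ z⁻¹ * S.δ ^ s ∈ S.M

/-- The cycling conjugator. -/
def sig (k : ℤ) (z : G) : G :=
  S.δ ^ k * S.gcd S.δ ((S.δ ^ k)⁻¹ * z) * (S.δ ^ k)⁻¹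

/-- Product of the cycling conjugators along the trajectory of `z`. -/
def piSeq (k : ℤ) (z : G) : ℕ → G
  | 0 => 1
  | (j+1) => piSeq k z j * S.sig k (S.cyc^[j] z)

section SS

variable {x : G} {k s : ℤ}

lemma isInf_of_SSc (hδ : S.δ ≠ 1)
    (hmaxk : ∀ z, IsConj x z → ∀ k', S.IsInf z k' → k' ≤ k)
    {z : G} (hz : S.SSc x k s z) : S.IsInf z k := by
  obtain ⟨hconj, hk, hs⟩ := hz
  have hbd : ∀ j : ℤ, (S.δ ^ j)⁻¹ * z ∈ S.M → j ≤ s := by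
    intro j hj
    exact S.le_of_zpow_dvd hδ (S.dvd_trans' hj hs)
  obtain ⟨jm, hjm, hjmax⟩ := Int.exists_greatest_of_bdd ⟨s, hbd⟩ ⟨k, hk⟩
  have h1 : jm ≤ k := hmaxk z hconj jm ⟨hjm, hjmax⟩
  have h2 : k ≤ jm := hjmax k hk
  have : jm = k := le_antisymm h1 h2
  rw [← this]
  exact ⟨hjm, hjmax⟩

lemma isSup_of_SSc (hδ : S.δ ≠ 1)
    (hmins : ∀ z, IsConj x z → ∀ s', S.IsSup z s' → s ≤ s')
    {z : G} (hz : S.SSc x k s z) : S.IsSup z s := by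
  obtain ⟨hconj, hk, hs⟩ := hz
  have hbd : ∀ j : ℤ, z⁻¹ * S.δ ^ j ∈ S.M → k ≤ j := by
    intro j hj
    exact S.le_of_zpow_dvd hδ (S.dvd_trans' hk hj)
  obtain ⟨sm, hsm, hsmin⟩ := Int.exists_least_of_bdd ⟨k, hbd⟩ ⟨s, hs⟩
  have h1 : s ≤ sm := hmins z hconj sm ⟨hsm, hsmin⟩
  have h2 : sm ≤ s := hsmin s hs
  have : sm = s := le_antisymm h2 h1
  rw [← this]
  exact ⟨hsm, hsmin⟩

lemma InSS_of_SSc (hδ : S.δ ≠ 1)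
    (hmaxk : ∀ z, IsConj x z → ∀ k', S.IsInf z k' → k' ≤ k)
    (hmins : ∀ z, IsConj x z → ∀ s', S.IsSup z s' → s ≤ s')
    {z : G} (hz : S.SSc x k s z) : S.InSS x z :=
  ⟨hz.1, ⟨k, S.isInf_of_SSc hδ hmaxk hz, hmaxk⟩, ⟨s, S.isSup_of_SSc hδ hmins hz, hmins⟩⟩

lemma SSc_of_InSS {y : G} (hconjy : IsConj x y) (hyinf : S.IsInf y k) (hysup : S.IsSup y s)
    (hmaxk : ∀ z, IsConj x z → ∀ k', S.IsInf z k' → k' ≤ k)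
    (hmins : ∀ z, IsConj x z → ∀ s', S.IsSup z s' → s ≤ s')
    {z : G} (hz : S.InSS x z) : S.SSc x k s z := by
  obtain ⟨hconj, ⟨k₁, hk₁, hk₁max⟩, ⟨s₁, hs₁, hs₁min⟩⟩ := hz
  have hkk : k₁ = k := le_antisymm (hmaxk z hconj k₁ hk₁) (hk₁max y hconjy k hyinf)
  have hss : s₁ = s := le_antisymm (hs₁min y hconjy s hysup) (hmins z hconj s₁ hs₁)
  exact ⟨hconj, hkk ▸ hk₁.1, hss ▸ hs₁.1⟩

lemma isConj_conj {z : G} (hz : IsConj x z) (w : G) : IsConj x (w⁻¹ * z * w) := by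
  refine hz.trans (isConj_iff.2 ⟨w⁻¹, ?_⟩)
  group

/-- Convexity: the super summit condition is closed under gcd of conjugators. -/
lemma SSc_gcd {z g h : G} (hz : S.SSc x k s z)
    (hg : S.SSc x k s (g⁻¹ * z * g)) (hh : S.SSc x k s (h⁻¹ * z * h)) :
    S.SSc x k s ((S.gcd g h)⁻¹ * z * S.gcd g h) := by
  obtain ⟨hzc, hzk, hzs⟩ := hz
  refine ⟨isConj_conj hzc _, ?_, ?_⟩
  · -- inf condition
    have Cg : ((S.δ^k)⁻¹ * g * S.δ^k)⁻¹ * ((S.δ^k)⁻¹ * z * g) ∈ S.M := by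
      have := hg.2.1
      have e : (S.δ^k)⁻¹ * (g⁻¹ * z * g)
          = ((S.δ^k)⁻¹ * g * S.δ^k)⁻¹ * ((S.δ^k)⁻¹ * z * g) := by group
      rwa [e] at this
    have Ch : ((S.δ^k)⁻¹ * h * S.δ^k)⁻¹ * ((S.δ^k)⁻¹ * z * h) ∈ S.M := by
      have := hh.2.1
      have e : (S.δ^k)⁻¹ * (h⁻¹ * z * h)
          = ((S.δ^k)⁻¹ * h * S.δ^k)⁻¹ * ((S.δ^k)⁻¹ * z * h) := by group
      rwa [e] at this
    set X := S.gcd ((S.δ^k)⁻¹ * g * S.δ^k) ((S.δ^k)⁻¹ * h * S.δ^k) with hXdef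
    have s1 : X⁻¹ * ((S.δ^k)⁻¹ * z * g) ∈ S.M :=
      S.dvd_trans' (S.gcd_dvd_left _ _) Cg
    have s2 : X⁻¹ * ((S.δ^k)⁻¹ * z * h) ∈ S.M :=
      S.dvd_trans' (S.gcd_dvd_right _ _) Ch
    have s3 := S.gcd_greatest g h (((S.δ^k)⁻¹ * z)⁻¹ * X) ?_ ?_
    · have hX : X = (S.δ^k)⁻¹ * S.gcd g h * S.δ^k := S.gcd_conj_zpow k g h
      have e : (((S.δ^k)⁻¹ * z)⁻¹ * X)⁻¹ * S.gcd g h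
          = X⁻¹ * ((S.δ^k)⁻¹ * z) * S.gcd g h := by group
      rw [e, hX] at s3
      have e2 : ((S.δ^k)⁻¹ * S.gcd g h * S.δ^k)⁻¹ * ((S.δ^k)⁻¹ * z) * S.gcd g h
          = (S.δ^k)⁻¹ * ((S.gcd g h)⁻¹ * z * S.gcd g h) := by group
      rwa [e2] at s3
    · have e : (((S.δ^k)⁻¹ * z)⁻¹ * X)⁻¹ * g = X⁻¹ * ((S.δ^k)⁻¹ * z * g) := by group
      rw [e]; exact s1
    · have e : (((S.δ^k)⁻¹ * z)⁻¹ * X)⁻¹ * h = X⁻¹ * ((S.δ^k)⁻¹ * z * h) := by group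
      rw [e]; exact s2
  · -- sup condition
    have s3 := S.gcd_greatest ((S.δ^s)⁻¹ * g * S.δ^s) ((S.δ^s)⁻¹ * h * S.δ^s)
        ((S.δ^s)⁻¹ * z * S.gcd g h) ?_ ?_
    · have hX : S.gcd ((S.δ^s)⁻¹ * g * S.δ^s) ((S.δ^s)⁻¹ * h * S.δ^s)
          = (S.δ^s)⁻¹ * S.gcd g h * S.δ^s := S.gcd_conj_zpow s g h
      rw [hX] at s3
      have e : ((S.δ^s)⁻¹ * z * S.gcd g h)⁻¹ * ((S.δ^s)⁻¹ * S.gcd g h * S.δ^s)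
          = ((S.gcd g h)⁻¹ * z * S.gcd g h)⁻¹ * S.δ^s := by group
      rwa [e] at s3
    · have e : ((S.δ^s)⁻¹ * z * S.gcd g h)⁻¹ * ((S.δ^s)⁻¹ * g * S.δ^s)
          = ((S.gcd g h)⁻¹ * g) * ((g⁻¹ * z * g)⁻¹ * S.δ^s) := by group
      rw [e]; exact mul_mem (S.gcd_dvd_left g h) hg.2.2
    · have e : ((S.δ^s)⁻¹ * z * S.gcd g h)⁻¹ * ((S.δ^s)⁻¹ * h * S.δ^s)
          = ((S.gcd g h)⁻¹ * h) * ((h⁻¹ * z * h)⁻¹ * S.δ^s) := by group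
      rw [e]; exact mul_mem (S.gcd_dvd_right g h) hh.2.2

/-- The super summit condition is preserved by conjugation by powers of δ. -/
lemma SSc_conj_zpow {z : G} (hz : S.SSc x k s z) (m : ℤ) :
    S.SSc x k s ((S.δ^m)⁻¹ * z * S.δ^m) := by
  obtain ⟨hzc, hzk, hzs⟩ := hz
  refine ⟨isConj_conj hzc _, ?_, ?_⟩
  · have := S.conj_zpow_mem m hzk
    have e : (S.δ^m)⁻¹ * ((S.δ^k)⁻¹ * z) * S.δ^m
        = (S.δ^k)⁻¹ * ((S.δ^m)⁻¹ * z * S.δ^m) := by group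
    rwa [e] at this
  · have := S.conj_zpow_mem m hzs
    have e : (S.δ^m)⁻¹ * (z⁻¹ * S.δ^s) * S.δ^m
        = ((S.δ^m)⁻¹ * z * S.δ^m)⁻¹ * S.δ^s := by group
    rwa [e] at this

end SS

end Garside
namespace Garside

variable {G : Type*} [Group G] (S : Garside G)

section CYC

variable {x : G} {k s : ℤ}

lemma cyc_eq_conj (hδ : S.δ ≠ 1)
    (hmaxk : ∀ z, IsConj x z → ∀ k', S.IsInf z k' → k' ≤ k)
    {z : G} (hz : S.SSc x k s z) :
    S.cyc z = (S.sig k z)⁻¹ * z * S.sig k z := by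
  have hinf := S.isInf_of_SSc hδ hmaxk hz
  simpa only [sig] using S.cyc_spec z k hinf

lemma sig_mem {z : G} (hz : S.SSc x k s z) : S.sig k z ∈ S.M :=
  S.conj_zpow_mem' k (S.gcd_mem S.δ_mem hz.2.1)

lemma k_le_s (hδ : S.δ ≠ 1) {z : G} (hz : S.SSc x k s z) : k ≤ s :=
  S.le_of_zpow_dvd hδ (S.dvd_trans' hz.2.1 hz.2.2)

/-- Cycling preserves the super summit condition. -/
lemma SSc_cyc (hδ : S.δ ≠ 1)
    (hmaxk : ∀ z, IsConj x z → ∀ k', S.IsInf z k' → k' ≤ k)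
    {z : G} (hz : S.SSc x k s z) : S.SSc x k s (S.cyc z) := by
  rw [S.cyc_eq_conj hδ hmaxk hz]
  set A := S.gcd S.δ ((S.δ^k)⁻¹ * z) with hA
  have hAM : A ∈ S.M := S.gcd_mem S.δ_mem hz.2.1
  have hsig : S.sig k z = S.δ^k * A * (S.δ^k)⁻¹ := rfl
  refine ⟨isConj_conj hz.1 _, ?_, ?_⟩
  · -- inf
    have m1 : A⁻¹ * ((S.δ^k)⁻¹ * z) ∈ S.M := S.gcd_dvd_right _ _
    have m2 : S.δ^k * A * (S.δ^k)⁻¹ ∈ S.M := S.conj_zpow_mem' k hAM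
    have := mul_mem m1 m2
    have e : A⁻¹ * ((S.δ^k)⁻¹ * z) * (S.δ^k * A * (S.δ^k)⁻¹)
        = (S.δ^k)⁻¹ * ((S.sig k z)⁻¹ * z * S.sig k z) := by
      rw [hsig]; group
    rwa [e] at this
  · -- sup
    rcases lt_or_eq_of_le (S.k_le_s hδ hz) with hks | hks
    · -- k < s : use the peeling lemma
      have hPs : ((S.δ^k)⁻¹ * z)⁻¹ * S.δ ^ (s - k) ∈ S.M := by
        have e : ((S.δ^k)⁻¹ * z)⁻¹ * S.δ ^ (s - k) = z⁻¹ * S.δ^s := by group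
        rw [e]; exact hz.2.2
      have hW := S.peel (t := s - k) (by omega) hz.2.1 hPs
      -- hW : ((δ^k)⁻¹z)⁻¹ * A * δ^(s-k-1) ∈ M
      have m1 : S.δ^k * (A⁻¹ * S.δ) * (S.δ^k)⁻¹ ∈ S.M :=
        S.conj_zpow_mem' k (S.gcd_dvd_left _ _)
      have m2 := S.tau_mem hW
      have := mul_mem m1 m2
      have e : S.δ^k * (A⁻¹ * S.δ) * (S.δ^k)⁻¹ *
            (S.δ⁻¹ * (((S.δ^k)⁻¹ * z)⁻¹ * S.gcd S.δ ((S.δ^k)⁻¹ * z) * S.δ ^ (s - k - 1)) * S.δ)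
          = ((S.sig k z)⁻¹ * z * S.sig k z)⁻¹ * S.δ^s := by
        rw [hsig, ← hA]; group
      rwa [e] at this
    · -- k = s : z = δ^k and cycling is trivial
      have hP1 : (S.δ^k)⁻¹ * z = 1 := by
        apply S.eq_one_of_inv_mem hz.2.1
        have e : ((S.δ^k)⁻¹ * z)⁻¹ = z⁻¹ * S.δ^s := by rw [hks]; group
        rw [e]; exact hz.2.2
      have hA1 : A = 1 := by rw [hA, hP1]; exact S.gcd_one_one
      have hsig1 : S.sig k z = 1 := by rw [hsig, hA1]; group
      rw [hsig1]
      have e : ((1:G)⁻¹ * z * 1)⁻¹ * S.δ^s = z⁻¹ * S.δ^s := by group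
      rw [e]; exact hz.2.2

/-- Transport of a positive conjugator is positive. -/
lemma transp_pos {z c : G} (hz : S.SSc x k s z) (hc : S.SSc x k s (c⁻¹ * z * c))
    (hcM : c ∈ S.M) :
    (S.sig k z)⁻¹ * c * S.sig k (c⁻¹ * z * c) ∈ S.M := by
  set P := (S.δ^k)⁻¹ * z with hP
  set P' := (S.δ^k)⁻¹ * (c⁻¹ * z * c) with hP'
  set A := S.gcd S.δ P with hA
  set A' := S.gcd S.δ P' with hA'
  set c' := (S.δ^k)⁻¹ * c * S.δ^k with hc'
  have hc'M : c' ∈ S.M := S.conj_zpow_mem k hcM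
  have e1 : c' * P' = P * c := by rw [hc', hP', hP]; group
  have e2 : S.gcd (c' * S.δ) (P * c) = c' * A' := by
    rw [← e1, S.gcd_mul_left, hA']
  have key : A⁻¹ * (c' * A') ∈ S.M := by
    rw [← e2]
    apply S.gcd_greatest
    · have m := mul_mem (S.gcd_dvd_left S.δ P) (S.tau_mem hc'M)
      have e : A⁻¹ * S.δ * (S.δ⁻¹ * c' * S.δ) = A⁻¹ * (c' * S.δ) := by group
      rwa [e] at m
    · have m := mul_mem (S.gcd_dvd_right S.δ P) hcM
      have e : A⁻¹ * P * c = A⁻¹ * (P * c) := by group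
      rwa [e] at m
  have := S.conj_zpow_mem' k key
  have e : S.δ^k * (A⁻¹ * (c' * A')) * (S.δ^k)⁻¹
      = (S.sig k z)⁻¹ * c * S.sig k (c⁻¹ * z * c) := by
    show S.δ^k * (A⁻¹ * (c' * A')) * (S.δ^k)⁻¹
      = (S.δ^k * A * (S.δ^k)⁻¹)⁻¹ * c * (S.δ^k * A' * (S.δ^k)⁻¹)
    rw [hc']; group
  rwa [e] at this

/-- Transport commutes with gcd of conjugators. -/
lemma transp_gcd {z g h : G} (hz : S.SSc x k s z)
    (hg : S.SSc x k s (g⁻¹ * z * g)) (hh : S.SSc x k s (h⁻¹ * z * h)) :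
    (S.sig k z)⁻¹ * S.gcd g h * S.sig k ((S.gcd g h)⁻¹ * z * S.gcd g h)
      = S.gcd ((S.sig k z)⁻¹ * g * S.sig k (g⁻¹ * z * g))
              ((S.sig k z)⁻¹ * h * S.sig k (h⁻¹ * z * h)) := by
  set w := S.gcd g h with hw
  have hzw : S.SSc x k s (w⁻¹ * z * w) := S.SSc_gcd hz hg hh
  set σ := S.sig k z with hσ
  set σg := S.sig k (g⁻¹ * z * g) with hσg
  set σh := S.sig k (h⁻¹ * z * h) with hσh
  set σw := S.sig k (w⁻¹ * z * w) with hσw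
  apply S.dvd_antisymm'
  · -- φ(w) divides gcd (φ g) (φ h)
    apply S.gcd_greatest
    · have earg : (w⁻¹ * g)⁻¹ * (w⁻¹ * z * w) * (w⁻¹ * g) = g⁻¹ * z * g := by group
      have hm : (w⁻¹ * g) ∈ S.M := S.gcd_dvd_left g h
      have := S.transp_pos (c := w⁻¹ * g) hzw (by rw [earg]; exact hg) hm
      rw [earg] at this
      have e : (S.sig k (w⁻¹ * z * w))⁻¹ * (w⁻¹ * g) * S.sig k (g⁻¹ * z * g)
          = (σ⁻¹ * w * σw)⁻¹ * (σ⁻¹ * g * σg) := by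
        rw [← hσw, ← hσg]; group
      rwa [e] at this
    · have earg : (w⁻¹ * h)⁻¹ * (w⁻¹ * z * w) * (w⁻¹ * h) = h⁻¹ * z * h := by group
      have hm : (w⁻¹ * h) ∈ S.M := S.gcd_dvd_right g h
      have := S.transp_pos (c := w⁻¹ * h) hzw (by rw [earg]; exact hh) hm
      rw [earg] at this
      have e : (S.sig k (w⁻¹ * z * w))⁻¹ * (w⁻¹ * h) * S.sig k (h⁻¹ * z * h)
          = (σ⁻¹ * w * σw)⁻¹ * (σ⁻¹ * h * σh) := by
        rw [← hσw, ← hσh]; group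
      rwa [e] at this
  · -- gcd (φ g) (φ h) divides φ(w)
    set P := (S.δ^k)⁻¹ * z with hP
    set Pg := (S.δ^k)⁻¹ * (g⁻¹ * z * g) with hPg
    set Ph := (S.δ^k)⁻¹ * (h⁻¹ * z * h) with hPh
    set Pw := (S.δ^k)⁻¹ * (w⁻¹ * z * w) with hPw
    set Ag := S.gcd S.δ Pg with hAg
    set Ah := S.gcd S.δ Ph with hAh
    set Aw := S.gcd S.δ Pw with hAw
    have hσgA : σg = S.δ^k * Ag * (S.δ^k)⁻¹ := rfl
    have hσhA : σh = S.δ^k * Ah * (S.δ^k)⁻¹ := rfl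
    have hσwA : σw = S.δ^k * Aw * (S.δ^k)⁻¹ := rfl
    -- t := gcd (g σg) (h σh),  r := w⁻¹ t ∈ M
    set t := S.gcd (g * σg) (h * σh) with ht
    have hrM : w⁻¹ * t ∈ S.M := by
      apply S.gcd_greatest
      · have := mul_mem (S.gcd_dvd_left g h) (S.sig_mem hg)
        have e : w⁻¹ * g * σg = w⁻¹ * (g * σg) := by group
        rwa [e] at this
      · have := mul_mem (S.gcd_dvd_right g h) (S.sig_mem hh)
        have e : w⁻¹ * h * σh = w⁻¹ * (h * σh) := by group
        rwa [e] at this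
    -- r = gcd (w⁻¹ g σg) (w⁻¹ h σh)
    have hr_eq : w⁻¹ * t = S.gcd (w⁻¹ * (g * σg)) (w⁻¹ * (h * σh)) := by
      rw [S.gcd_mul_left, ht]
    -- r' = τ^k r = gcd (p Ag) (q Ah)
    set p := (S.δ^k)⁻¹ * (w⁻¹ * g) * S.δ^k with hp
    set q := (S.δ^k)⁻¹ * (w⁻¹ * h) * S.δ^k with hq
    have hr' : (S.δ^k)⁻¹ * (w⁻¹ * t) * S.δ^k = S.gcd (p * Ag) (q * Ah) := by
      rw [hr_eq, ← S.gcd_conj_zpow k]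
      have e1 : (S.δ^k)⁻¹ * (w⁻¹ * (g * σg)) * S.δ^k = p * Ag := by
        rw [hp, hσgA]; group
      have e2 : (S.δ^k)⁻¹ * (w⁻¹ * (h * σh)) * S.δ^k = q * Ah := by
        rw [hq, hσhA]; group
      rw [e1, e2]
    -- gcd p q = 1
    have hgcdw : S.gcd (w⁻¹ * g) (w⁻¹ * h) = 1 := by
      rw [S.gcd_mul_left, ← hw]; group
    have hpq : S.gcd p q = 1 := by
      rw [hp, hq, S.gcd_conj_zpow k, hgcdw]; group
    -- X := gcd (p Ag) (q Ah) divides δ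
    set X := S.gcd (p * Ag) (q * Ah) with hX
    have hpM : p ∈ S.M := S.conj_zpow_mem k (S.gcd_dvd_left g h)
    have hqM : q ∈ S.M := S.conj_zpow_mem k (S.gcd_dvd_right g h)
    have hXδ : X⁻¹ * S.δ ∈ S.M := by
      -- X ≼ p δ and X ≼ q δ, and gcd (pδ) (qδ) = δ τ(gcd p q) = δ
      have hXpδ : X⁻¹ * (p * S.δ) ∈ S.M := by
        refine S.dvd_trans' (S.gcd_dvd_left (p * Ag) (q * Ah)) ?_
        have := S.gcd_dvd_left S.δ Pg
        have e : (p * Ag)⁻¹ * (p * S.δ) = Ag⁻¹ * S.δ := by group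
        rwa [e]
      have hXqδ : X⁻¹ * (q * S.δ) ∈ S.M := by
        refine S.dvd_trans' (S.gcd_dvd_right (p * Ag) (q * Ah)) ?_
        have := S.gcd_dvd_left S.δ Ph
        have e : (q * Ah)⁻¹ * (q * S.δ) = Ah⁻¹ * S.δ := by group
        rwa [e]
      have hgpq : S.gcd (p * S.δ) (q * S.δ) = S.δ := by
        have e1 : p * S.δ = S.δ * ((S.δ^(1:ℤ))⁻¹ * p * S.δ^(1:ℤ)) := by group
        have e2 : q * S.δ = S.δ * ((S.δ^(1:ℤ))⁻¹ * q * S.δ^(1:ℤ)) := by group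
        rw [e1, e2, S.gcd_mul_left, S.gcd_conj_zpow 1, hpq]
        group
      have := S.gcd_greatest (p * S.δ) (q * S.δ) X hXpδ hXqδ
      rwa [hgpq] at this
    have hXPw : X⁻¹ * Pw ∈ S.M := by
      have hXg : X⁻¹ * (Pw * (w⁻¹ * g)) ∈ S.M := by
        refine S.dvd_trans' (S.gcd_dvd_left (p * Ag) (q * Ah)) ?_
        have := S.gcd_dvd_right S.δ Pg
        have e : (p * Ag)⁻¹ * (Pw * (w⁻¹ * g)) = Ag⁻¹ * Pg := by
          rw [hp, hPg, hPw]; group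
        rwa [e]
      have hXh : X⁻¹ * (Pw * (w⁻¹ * h)) ∈ S.M := by
        refine S.dvd_trans' (S.gcd_dvd_right (p * Ag) (q * Ah)) ?_
        have := S.gcd_dvd_right S.δ Ph
        have e : (q * Ah)⁻¹ * (Pw * (w⁻¹ * h)) = Ah⁻¹ * Ph := by
          rw [hq, hPh, hPw]; group
        rwa [e]
      have hgP : S.gcd (Pw * (w⁻¹ * g)) (Pw * (w⁻¹ * h)) = Pw := by
        rw [S.gcd_mul_left, hgcdw]; group
      have := S.gcd_greatest _ _ X hXg hXh
      rwa [hgP] at this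
    have hXAw : X⁻¹ * Aw ∈ S.M := S.gcd_greatest _ _ _ hXδ hXPw
    -- assemble: (gcd φg φh)⁻¹ φw = (w⁻¹ t)'⁻¹-conjugated membership
    have hfin : (S.δ^k * ((S.δ^k)⁻¹ * (w⁻¹ * t) * S.δ^k)⁻¹ * (S.δ^k)⁻¹) * σw ∈ S.M := by
      have := S.conj_zpow_mem' k (by rw [hr'] ; exact hXAw :
        ((S.δ^k)⁻¹ * (w⁻¹ * t) * S.δ^k)⁻¹ * Aw ∈ S.M)
      have e : S.δ^k * (((S.δ^k)⁻¹ * (w⁻¹ * t) * S.δ^k)⁻¹ * Aw) * (S.δ^k)⁻¹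
          = (S.δ^k * ((S.δ^k)⁻¹ * (w⁻¹ * t) * S.δ^k)⁻¹ * (S.δ^k)⁻¹) * σw := by
        rw [hσwA]; group
      rwa [e] at this
    -- finally rewrite in terms of gcds of the φ's
    have hgcdφ : σ * S.gcd (σ⁻¹ * g * σg) (σ⁻¹ * h * σh) = t := by
      rw [ht]
      have e1 : g * σg = σ * (σ⁻¹ * g * σg) := by group
      have e2 : h * σh = σ * (σ⁻¹ * h * σh) := by group
      rw [e1, e2, S.gcd_mul_left]
    have e : (S.δ^k * ((S.δ^k)⁻¹ * (w⁻¹ * t) * S.δ^k)⁻¹ * (S.δ^k)⁻¹) * σw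
        = (S.gcd (σ⁻¹ * g * σg) (σ⁻¹ * h * σh))⁻¹ * (σ⁻¹ * w * σw) := by
      rw [← hgcdφ]; group
    rw [e] at hfin
    exact hfin

end CYC

end Garside
namespace Garside

variable {G : Type*} [Group G] (S : Garside G)

section TRAJ

variable {x : G} {k s : ℤ}
variable (hδ : S.δ ≠ 1)
variable (hmaxk : ∀ z, IsConj x z → ∀ k', S.IsInf z k' → k' ≤ k)

include hδ hmaxk

lemma SSc_cyc_iter {z : G} (hz : S.SSc x k s z) (j : ℕ) : S.SSc x k s (S.cyc^[j] z) := by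
  induction j with
  | zero => simpa using hz
  | succ j ih =>
      rw [Function.iterate_succ_apply']
      exact S.SSc_cyc hδ hmaxk ih

lemma cyc_iter_eq {z : G} (hz : S.SSc x k s z) (j : ℕ) :
    S.cyc^[j] z = (S.piSeq k z j)⁻¹ * z * S.piSeq k z j := by
  induction j with
  | zero => simp [piSeq]
  | succ j ih =>
      rw [Function.iterate_succ_apply', S.cyc_eq_conj hδ hmaxk (S.SSc_cyc_iter hδ hmaxk hz j), ih]
      show _ = (S.piSeq k z j * S.sig k (S.cyc^[j] z))⁻¹ * z *
        (S.piSeq k z j * S.sig k (S.cyc^[j] z))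
      rw [ih]
      group

lemma cyc_iter_conj {z c : G} (hz : S.SSc x k s z) (hc : S.SSc x k s (c⁻¹ * z * c)) (j : ℕ) :
    S.cyc^[j] (c⁻¹ * z * c)
      = ((S.piSeq k z j)⁻¹ * c * S.piSeq k (c⁻¹ * z * c) j)⁻¹ * (S.cyc^[j] z) *
        ((S.piSeq k z j)⁻¹ * c * S.piSeq k (c⁻¹ * z * c) j) := by
  rw [S.cyc_iter_eq hδ hmaxk hz j, S.cyc_iter_eq hδ hmaxk hc j]
  group

lemma transp_iter_mem {z c : G} (hz : S.SSc x k s z) (hc : S.SSc x k s (c⁻¹ * z * c))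
    (hcM : c ∈ S.M) (j : ℕ) :
    (S.piSeq k z j)⁻¹ * c * S.piSeq k (c⁻¹ * z * c) j ∈ S.M := by
  induction j with
  | zero => simpa [piSeq] using hcM
  | succ j ih =>
      set Tj := (S.piSeq k z j)⁻¹ * c * S.piSeq k (c⁻¹ * z * c) j with hTj
      have hzj := S.SSc_cyc_iter hδ hmaxk hz j
      have hconj : S.SSc x k s (Tj⁻¹ * (S.cyc^[j] z) * Tj) := by
        rw [← S.cyc_iter_conj hδ hmaxk hz hc j]
        exact S.SSc_cyc_iter hδ hmaxk hc j
      have := S.transp_pos hzj hconj ih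
      have e : (S.sig k (S.cyc^[j] z))⁻¹ * Tj * S.sig k (Tj⁻¹ * S.cyc^[j] z * Tj)
          = (S.piSeq k z (j+1))⁻¹ * c * S.piSeq k (c⁻¹ * z * c) (j+1) := by
        rw [← S.cyc_iter_conj hδ hmaxk hz hc j]
        show _ = (S.piSeq k z j * S.sig k (S.cyc^[j] z))⁻¹ * c *
          (S.piSeq k (c⁻¹ * z * c) j * S.sig k (S.cyc^[j] (c⁻¹ * z * c)))
        rw [hTj]
        group
      rwa [e] at this

lemma transp_iter_gcd {z g h : G} (hz : S.SSc x k s z)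
    (hg : S.SSc x k s (g⁻¹ * z * g)) (hh : S.SSc x k s (h⁻¹ * z * h)) (j : ℕ) :
    (S.piSeq k z j)⁻¹ * S.gcd g h * S.piSeq k ((S.gcd g h)⁻¹ * z * S.gcd g h) j
      = S.gcd ((S.piSeq k z j)⁻¹ * g * S.piSeq k (g⁻¹ * z * g) j)
              ((S.piSeq k z j)⁻¹ * h * S.piSeq k (h⁻¹ * z * h) j) := by
  have hw : S.SSc x k s ((S.gcd g h)⁻¹ * z * S.gcd g h) := S.SSc_gcd hz hg hh
  induction j with
  | zero => simp [piSeq]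
  | succ j ih =>
      set Tg := (S.piSeq k z j)⁻¹ * g * S.piSeq k (g⁻¹ * z * g) j with hTg
      set Th := (S.piSeq k z j)⁻¹ * h * S.piSeq k (h⁻¹ * z * h) j with hTh
      have hzj := S.SSc_cyc_iter hδ hmaxk hz j
      have hgj : S.SSc x k s (Tg⁻¹ * (S.cyc^[j] z) * Tg) := by
        rw [← S.cyc_iter_conj hδ hmaxk hz hg j]; exact S.SSc_cyc_iter hδ hmaxk hg j
      have hhj : S.SSc x k s (Th⁻¹ * (S.cyc^[j] z) * Th) := by
        rw [← S.cyc_iter_conj hδ hmaxk hz hh j]; exact S.SSc_cyc_iter hδ hmaxk hh j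
      have key := S.transp_gcd hzj hgj hhj
      rw [← ih] at key
      -- identify the middle conjugate with the w-trajectory
      have ew : ((S.piSeq k z j)⁻¹ * S.gcd g h * S.piSeq k ((S.gcd g h)⁻¹ * z * S.gcd g h) j)⁻¹ *
            (S.cyc^[j] z) *
            ((S.piSeq k z j)⁻¹ * S.gcd g h * S.piSeq k ((S.gcd g h)⁻¹ * z * S.gcd g h) j)
          = S.cyc^[j] ((S.gcd g h)⁻¹ * z * S.gcd g h) :=
        (S.cyc_iter_conj hδ hmaxk hz hw j).symm
      rw [ew] at key
      have eg : Tg⁻¹ * (S.cyc^[j] z) * Tg = S.cyc^[j] (g⁻¹ * z * g) :=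
        (S.cyc_iter_conj hδ hmaxk hz hg j).symm
      have eh : Th⁻¹ * (S.cyc^[j] z) * Th = S.cyc^[j] (h⁻¹ * z * h) :=
        (S.cyc_iter_conj hδ hmaxk hz hh j).symm
      rw [eg, eh] at key
      -- now unfold piSeq at j+1
      have lhs_e : (S.piSeq k z (j+1))⁻¹ * S.gcd g h *
            S.piSeq k ((S.gcd g h)⁻¹ * z * S.gcd g h) (j+1)
          = (S.sig k (S.cyc^[j] z))⁻¹ *
            ((S.piSeq k z j)⁻¹ * S.gcd g h * S.piSeq k ((S.gcd g h)⁻¹ * z * S.gcd g h) j) *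
            S.sig k (S.cyc^[j] ((S.gcd g h)⁻¹ * z * S.gcd g h)) := by
        show (S.piSeq k z j * S.sig k (S.cyc^[j] z))⁻¹ * S.gcd g h *
            (S.piSeq k ((S.gcd g h)⁻¹ * z * S.gcd g h) j *
              S.sig k (S.cyc^[j] ((S.gcd g h)⁻¹ * z * S.gcd g h))) = _
        group
      have rhs_g : (S.piSeq k z (j+1))⁻¹ * g * S.piSeq k (g⁻¹ * z * g) (j+1)
          = (S.sig k (S.cyc^[j] z))⁻¹ * Tg * S.sig k (S.cyc^[j] (g⁻¹ * z * g)) := by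
        show (S.piSeq k z j * S.sig k (S.cyc^[j] z))⁻¹ * g *
            (S.piSeq k (g⁻¹ * z * g) j * S.sig k (S.cyc^[j] (g⁻¹ * z * g))) = _
        rw [hTg]; group
      have rhs_h : (S.piSeq k z (j+1))⁻¹ * h * S.piSeq k (h⁻¹ * z * h) (j+1)
          = (S.sig k (S.cyc^[j] z))⁻¹ * Th * S.sig k (S.cyc^[j] (h⁻¹ * z * h)) := by
        show (S.piSeq k z j * S.sig k (S.cyc^[j] z))⁻¹ * h *
            (S.piSeq k (h⁻¹ * z * h) j * S.sig k (S.cyc^[j] (h⁻¹ * z * h))) = _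
        rw [hTh]; group
      rw [lhs_e, rhs_g, rhs_h]
      exact key

end TRAJ

section TAU

variable {x : G} {k s : ℤ}

lemma sig_conj_zpow (m : ℤ) (z : G) :
    S.sig k ((S.δ^m)⁻¹ * z * S.δ^m) = (S.δ^m)⁻¹ * S.sig k z * S.δ^m := by
  have h := S.gcd_conj_zpow m S.δ ((S.δ^k)⁻¹ * z)
  have e3 : (S.δ^m)⁻¹ * S.δ * S.δ^m = S.δ := by group
  rw [e3] at h
  show S.δ^k * S.gcd S.δ ((S.δ^k)⁻¹ * ((S.δ^m)⁻¹ * z * S.δ^m)) * (S.δ^k)⁻¹ = _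
  rw [show (S.δ^k)⁻¹ * ((S.δ^m)⁻¹ * z * S.δ^m)
      = (S.δ^m)⁻¹ * ((S.δ^k)⁻¹ * z) * S.δ^m by group, h]
  show _ = (S.δ^m)⁻¹ * (S.δ^k * S.gcd S.δ ((S.δ^k)⁻¹ * z) * (S.δ^k)⁻¹) * S.δ^m
  group

variable (hδ : S.δ ≠ 1)
variable (hmaxk : ∀ z, IsConj x z → ∀ k', S.IsInf z k' → k' ≤ k)

include hδ hmaxk

lemma cyc_conj_zpow {z : G} (hz : S.SSc x k s z) (m : ℤ) :
    S.cyc ((S.δ^m)⁻¹ * z * S.δ^m) = (S.δ^m)⁻¹ * S.cyc z * S.δ^m := by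
  rw [S.cyc_eq_conj hδ hmaxk (S.SSc_conj_zpow hz m), S.cyc_eq_conj hδ hmaxk hz,
    S.sig_conj_zpow m z]
  group

lemma cyc_iter_conj_zpow {z : G} (hz : S.SSc x k s z) (m : ℤ) (j : ℕ) :
    S.cyc^[j] ((S.δ^m)⁻¹ * z * S.δ^m) = (S.δ^m)⁻¹ * S.cyc^[j] z * S.δ^m := by
  induction j with
  | zero => simp
  | succ j ih =>
      rw [Function.iterate_succ_apply', Function.iterate_succ_apply', ih,
        S.cyc_conj_zpow hδ hmaxk (S.SSc_cyc_iter hδ hmaxk hz j) m]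

lemma piSeq_conj_zpow {z : G} (hz : S.SSc x k s z) (m : ℤ) (j : ℕ) :
    S.piSeq k ((S.δ^m)⁻¹ * z * S.δ^m) j = (S.δ^m)⁻¹ * S.piSeq k z j * S.δ^m := by
  induction j with
  | zero => show (1:G) = (S.δ^m)⁻¹ * 1 * S.δ^m ; group
  | succ j ih =>
      show S.piSeq k ((S.δ^m)⁻¹ * z * S.δ^m) j *
          S.sig k (S.cyc^[j] ((S.δ^m)⁻¹ * z * S.δ^m)) = _
      rw [ih, S.cyc_iter_conj_zpow hδ hmaxk hz m j, S.sig_conj_zpow m (S.cyc^[j] z)]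
      show _ = (S.δ^m)⁻¹ * (S.piSeq k z j * S.sig k (S.cyc^[j] z)) * S.δ^m
      group

lemma transp_iter_dvd {z c : G} (hz : S.SSc x k s z) (hc : S.SSc x k s (c⁻¹ * z * c))
    (m : ℤ) (hcd : c⁻¹ * S.δ^m ∈ S.M) (j : ℕ) :
    ((S.piSeq k z j)⁻¹ * c * S.piSeq k (c⁻¹ * z * c) j)⁻¹ * S.δ^m ∈ S.M := by
  have earg : (c⁻¹ * S.δ^m)⁻¹ * (c⁻¹ * z * c) * (c⁻¹ * S.δ^m)
      = (S.δ^m)⁻¹ * z * S.δ^m := by group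
  have hτ : S.SSc x k s ((c⁻¹ * S.δ^m)⁻¹ * (c⁻¹ * z * c) * (c⁻¹ * S.δ^m)) := by
    rw [earg]; exact S.SSc_conj_zpow hz m
  have := S.transp_iter_mem hδ hmaxk hc hτ hcd j
  have e : (S.piSeq k (c⁻¹ * z * c) j)⁻¹ * (c⁻¹ * S.δ^m) *
        S.piSeq k ((c⁻¹ * S.δ^m)⁻¹ * (c⁻¹ * z * c) * (c⁻¹ * S.δ^m)) j
      = ((S.piSeq k z j)⁻¹ * c * S.piSeq k (c⁻¹ * z * c) j)⁻¹ * S.δ^m := by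
    rw [earg, S.piSeq_conj_zpow hδ hmaxk hz m j]
    group
  rwa [e] at this

end TAU

section PERIOD

variable {k : ℤ}

lemma piSeq_add (z : G) (i j : ℕ) :
    S.piSeq k z (i + j) = S.piSeq k z i * S.piSeq k (S.cyc^[i] z) j := by
  induction j with
  | zero => simp [piSeq]
  | succ j ih =>
      have : i + (j + 1) = (i + j) + 1 := rfl
      rw [this]
      show S.piSeq k z (i+j) * S.sig k (S.cyc^[i+j] z) = _
      rw [ih]
      have e : S.cyc^[i + j] z = S.cyc^[j] (S.cyc^[i] z) := by
        rw [add_comm, Function.iterate_add_apply]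
      rw [e]
      show _ = S.piSeq k z i *
        (S.piSeq k (S.cyc^[i] z) j * S.sig k (S.cyc^[j] (S.cyc^[i] z)))
      group

lemma piSeq_fixed_pow {z : G} {n : ℕ} (hfix : S.cyc^[n] z = z) (a : ℕ) :
    S.piSeq k z (n * a) = (S.piSeq k z n) ^ a := by
  induction a with
  | zero => simp [piSeq]
  | succ a ih =>
      have e : n * (a + 1) = n * a + n := by ring
      rw [e, S.piSeq_add, pow_succ, ih]
      have hfix' : S.cyc^[n * a] z = z := by
        rw [Function.iterate_mul]
        exact Function.iterate_fixed hfix a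
      rw [hfix']

end PERIOD

end Garside
namespace Garside

/-- Descent step for the periodicity argument. -/
lemma descend {G : Type*} [Group G] {P Q a : G} {i d : ℤ}
    (h : (P^i)⁻¹ * a * Q^i = (P^(i+d))⁻¹ * a * Q^(i+d)) :
    a = (P^d)⁻¹ * a * Q^d := by
  have h2 : P^i * ((P^(i+d))⁻¹ * a * Q^(i+d)) * (Q^i)⁻¹ = (P^d)⁻¹ * a * Q^d := by
    group
  have h3 : P^i * ((P^i)⁻¹ * a * Q^i) * (Q^i)⁻¹ = a := by group
  rw [h, h2] at h3
  exact h3.symm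

end Garside

/-- Main theorem: if `y ∈ U_x` and `y^u, y^v ∈ U_x` for `u, v ∈ M`, then
`y^{u ∧ v} ∈ U_x`. -/
theorem US_gcd {G : Type*} [Group G] (S : Garside G)
    (x y u v : G)
    (hy : S.InUS x y) (hu : u ∈ S.M) (hv : v ∈ S.M)
    (hyu : S.InUS x (u⁻¹ * y * u)) (hyv : S.InUS x (v⁻¹ * y * v)) :
    S.InUS x ((S.gcd u v)⁻¹ * y * S.gcd u v) := by
  by_cases hδ1 : S.δ = 1
  · -- degenerate case: the group is trivial
    have hM : ∀ a ∈ S.M, a = 1 := by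
      intro a ha
      obtain ⟨L, hL, hp⟩ := S.exists_simples_list ha
      rw [← hp]
      apply List.prod_eq_one
      intro b hb
      have := hL b hb
      exact S.eq_one_of_inv_mem this.1 (by simpa [hδ1] using this.2)
    have hall : ∀ g : G, g = 1 := by
      intro g
      obtain ⟨a, haM, b, hbM, rfl⟩ := S.fractions g
      rw [hM a haM, hM b hbM]; simp
    have e : (S.gcd u v)⁻¹ * y * S.gcd u v = y := by
      rw [hall (S.gcd u v)]; group
    rw [e]; exact hy
  · obtain ⟨⟨hconjy, ⟨k, hky, hmaxk⟩, ⟨s, hsy, hmins⟩⟩, n0, hn0, hfix0⟩ := hy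
    obtain ⟨hssu, n1, hn1, hfix1⟩ := hyu
    obtain ⟨hssv, n2, hn2, hfix2⟩ := hyv
    have hyS : S.SSc x k s y := ⟨hconjy, hky.1, hsy.1⟩
    have huS : S.SSc x k s (u⁻¹ * y * u) :=
      S.SSc_of_InSS hconjy hky hsy hmaxk hmins hssu
    have hvS : S.SSc x k s (v⁻¹ * y * v) :=
      S.SSc_of_InSS hconjy hky hsy hmaxk hmins hssv
    have hwS : S.SSc x k s ((S.gcd u v)⁻¹ * y * S.gcd u v) := S.SSc_gcd hyS huS hvS
    -- common period N
    set N := n0 * (n1 * n2) with hN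
    have hNpos : 0 < N := by positivity
    have hfy : S.cyc^[N] y = y := by
      rw [hN, Function.iterate_mul]
      exact Function.iterate_fixed hfix0 _
    have hfu : S.cyc^[N] (u⁻¹ * y * u) = u⁻¹ * y * u := by
      rw [show N = n1 * (n0 * n2) by ring, Function.iterate_mul]
      exact Function.iterate_fixed hfix1 _
    have hfv : S.cyc^[N] (v⁻¹ * y * v) = v⁻¹ * y * v := by
      rw [show N = n2 * (n0 * n1) by ring, Function.iterate_mul]
      exact Function.iterate_fixed hfix2 _
    -- a common power of δ bounding u and v
    obtain ⟨mu, hmu⟩ := S.exists_dvd_pow hu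
    obtain ⟨mv, hmv⟩ := S.exists_dvd_pow hv
    set m : ℕ := mu + mv with hm
    have hum : u⁻¹ * S.δ^(m:ℤ) ∈ S.M := by
      refine S.dvd_trans' hmu ?_
      have e : (S.δ^(mu:ℤ))⁻¹ * S.δ^(m:ℤ) = S.δ^(mv:ℤ) := by
        rw [hm]; push_cast; rw [zpow_add]; group
      rw [e]; exact S.zpow_mem_of_nonneg (by positivity)
    have hvm : v⁻¹ * S.δ^(m:ℤ) ∈ S.M := by
      refine S.dvd_trans' hmv ?_
      have e : (S.δ^(mv:ℤ))⁻¹ * S.δ^(m:ℤ) = S.δ^(mu:ℤ) := by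
        rw [hm]; push_cast; rw [zpow_add]; group
      rw [e]; exact S.zpow_mem_of_nonneg (by positivity)
    -- the sequences of iterated transports
    set D := {d : G | d ∈ S.M ∧ d⁻¹ * S.δ ^ (m:ℤ) ∈ S.M} with hD
    have hDfin : (D ×ˢ D).Finite := (S.divisors_pow_finite m).prod (S.divisors_pow_finite m)
    set f : ℕ → G × G := fun a =>
      ((S.piSeq k y (N*a))⁻¹ * u * S.piSeq k (u⁻¹ * y * u) (N*a),
       (S.piSeq k y (N*a))⁻¹ * v * S.piSeq k (v⁻¹ * y * v) (N*a)) with hf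
    have hmem : ∀ a, f a ∈ D ×ˢ D := by
      intro a
      constructor
      · exact ⟨S.transp_iter_mem hδ1 hmaxk hyS huS hu (N*a),
          S.transp_iter_dvd hδ1 hmaxk hyS huS (m:ℤ) hum (N*a)⟩
      · exact ⟨S.transp_iter_mem hδ1 hmaxk hyS hvS hv (N*a),
          S.transp_iter_dvd hδ1 hmaxk hyS hvS (m:ℤ) hvm (N*a)⟩
    have : ∃ i j : ℕ, i < j ∧ f i = f j := by
      haveI := hDfin.to_subtype
      obtain ⟨i, j, hij, hfij⟩ :=
        Finite.exists_ne_map_eq_of_infinite (fun a : ℕ => (⟨f a, hmem a⟩ : ↥(D ×ˢ D)))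
      have hfeq : f i = f j := by simpa [Subtype.ext_iff] using hfij
      rcases lt_or_gt_of_ne hij with h | h
      · exact ⟨i, j, h, hfeq⟩
      · exact ⟨j, i, h, hfeq.symm⟩
    obtain ⟨i, j, hij, hfeq⟩ := this
    set d : ℕ := j - i with hd
    have hdpos : 0 < d := by omega
    have hjid : j = i + d := by omega
    -- power form of the piSeq's
    set P := S.piSeq k y N with hP
    set Qu := S.piSeq k (u⁻¹ * y * u) N with hQu
    set Qv := S.piSeq k (v⁻¹ * y * v) N with hQv
    have hPa : ∀ a : ℕ, S.piSeq k y (N*a) = P^(a:ℤ) := by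
      intro a; rw [S.piSeq_fixed_pow hfy a, zpow_natCast]
    have hQua : ∀ a : ℕ, S.piSeq k (u⁻¹ * y * u) (N*a) = Qu^(a:ℤ) := by
      intro a; rw [S.piSeq_fixed_pow hfu a, zpow_natCast]
    have hQva : ∀ a : ℕ, S.piSeq k (v⁻¹ * y * v) (N*a) = Qv^(a:ℤ) := by
      intro a; rw [S.piSeq_fixed_pow hfv a, zpow_natCast]
    -- extract the two component equations and descend
    have hu_eq : (P^(i:ℤ))⁻¹ * u * Qu^(i:ℤ) = (P^((i:ℤ)+(d:ℤ)))⁻¹ * u * Qu^((i:ℤ)+(d:ℤ)) := by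
      have h1 := congrArg Prod.fst hfeq
      simp only [hf] at h1
      rw [hPa i, hPa j, hQua i, hQua j] at h1
      rw [h1, hjid]; push_cast; ring_nf
    have hv_eq : (P^(i:ℤ))⁻¹ * v * Qv^(i:ℤ) = (P^((i:ℤ)+(d:ℤ)))⁻¹ * v * Qv^((i:ℤ)+(d:ℤ)) := by
      have h1 := congrArg Prod.snd hfeq
      simp only [hf] at h1
      rw [hPa i, hPa j, hQva i, hQva j] at h1
      rw [h1, hjid]; push_cast; ring_nf
    have hu_per : u = (P^(d:ℤ))⁻¹ * u * Qu^(d:ℤ) := Garside.descend hu_eq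
    have hv_per : v = (P^(d:ℤ))⁻¹ * v * Qv^(d:ℤ) := Garside.descend hv_eq
    -- transport of the gcd at time N*d
    have hgcd := S.transp_iter_gcd hδ1 hmaxk hyS huS hvS (N*d)
    rw [hPa d, hQua d, hQva d, ← hu_per, ← hv_per] at hgcd
    -- hgcd : (piSeq y (N*d))⁻¹ * gcd u v * piSeq (w⁻¹ y w) (N*d) = gcd u v
    have hfyd : S.cyc^[N*d] y = y := by
      rw [Function.iterate_mul]
      exact Function.iterate_fixed hfy d
    have hcycw := S.cyc_iter_conj hδ1 hmaxk hyS hwS (N*d)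
    rw [hPa d, hgcd, hfyd] at hcycw
    refine ⟨S.InSS_of_SSc hδ1 hmaxk hmins hwS, N*d, by positivity, hcycw⟩

end GarsideFormal
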